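/- arXiv:math/0611941 — 5 statements merged into one kernel-verified Lean document; each statement's English description precedes it below -/
import Mathlib

section
/- Let W be a finite set, inv : W → W a map, d ≥ 1 an integer, h : W × W × W → ℤ a family of integers, and for each w ∈ W let ρ(w) be a d×d matrix with rational entries, all of which are integers. Assume: (i) ρ(x)·ρ(y) = Σ_{z∈W} h(x,y,z)·ρ(z) for all x,y ∈ W; (ii) h(y, inv(x), z) = h(z, x, y) for all x,y,z ∈ W; (iii) there is a nonzero integer f such that the Schur relations with Schur element f hold: for all indices s,t,u,v ∈ {1,…,d}, Σ_{w∈W} ρ(w)_{s,t}·ρ(inv(w))_{u,v} equals f if s=v and t=u, and equals 0 otherwise. Then there exists a symmetric d×d integer matrix B which is positive definite (vᵀ·B·v > 0 for every nonzero v ∈ ℚ^d) such that B·ρ(inv(w)) = ρ(w)ᵀ·B for every w ∈ W, and every prime number dividing det(B) divides f. -/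
/-!
The Gram matrix `P = ∑_w ρ(w)ᵀ ρ(w)` of the integral form of `ρ` is an integral, symmetric,
positive definite intertwiner: positivity holds because the Schur relations give `f • v = 0`
whenever all `ρ(w)` kill `v`, and the symmetry of the structure constants turns `P ρ(inv w)`
into `ρ(w)ᵀ P`. Let `B` be `P` divided by the gcd of its entries. If a prime `p ∤ f` divided
`det B`, then modulo `p` the kernel of `B` would be nonzero and stable under every
`ρ(inv w)`, and the Schur relations, with `f` invertible mod `p`, would force `B ≡ 0 mod p`,
contradicting the primitivity of `B`.
-/

open Matrix

section Schur

variable {W n K L : Type*} [Fintype W] [DecidableEq n]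

def SchurRelations [CommRing K] (M : W → Matrix n n K) (inv : W → W) (c : K) : Prop :=
  ∀ s t u v : n, ∑ w, M w s t * M (inv w) u v = if s = v ∧ t = u then c else 0

namespace SchurRelations

variable [CommRing K] [CommRing L] {M : W → Matrix n n K} {inv : W → W} {c : K}

theorem map (hM : SchurRelations M inv c) (φ : K →+* L) :
    SchurRelations (fun w => (M w).map φ) inv (φ c) := by
  intro s t u v
  simp only [map_apply, ← map_mul, ← map_sum, hM s t u v, apply_ite φ, map_zero]

theorem of_map {φ : K →+* L} (hφ : Function.Injective φ)
    (hM : SchurRelations (fun w => (M w).map φ) inv (φ c)) : SchurRelations M inv c := by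
  intro s t u v
  apply hφ
  simpa only [map_apply, ← map_mul, ← map_sum, apply_ite φ, map_zero] using hM s t u v

theorem sum_smul (hM : SchurRelations M inv c) (s t : n) :
    ∑ w, M w s t • M (inv w) = c • single t s 1 := by
  ext u v
  simp only [Matrix.sum_apply, Matrix.smul_apply, smul_eq_mul, hM s t u v, single_apply]
  grind

variable [Fintype n]

theorem smul_eq_zero_of_forall_mulVec_eq_zero (hM : SchurRelations M inv c) {v : n → K}
    (hv : ∀ w, M (inv w) *ᵥ v = 0) : c • v = 0 := by
  funext s
  have := congrArg (· *ᵥ v) (hM.sum_smul s s)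
  simp only [sum_mulVec, smul_mulVec, hv, smul_zero, Finset.sum_const_zero] at this
  simpa [single_mulVec] using congrFun this.symm s

theorem mul_mul_eq_zero_of_mulVec_eq_zero (hM : SchurRelations M inv c) {A : Matrix n n K}
    {N : W → Matrix n n K} (hA : ∀ w, A * M (inv w) = N w * A) {v : n → K} (hv : A *ᵥ v = 0)
    (i t s : n) : c * v s * A i t = 0 := by
  have key : A *ᵥ ((∑ w, M w s t • M (inv w)) *ᵥ v) = 0 := by
    rw [sum_mulVec, mulVec_sum]
    refine Finset.sum_eq_zero fun w _ => ?_
    rw [smul_mulVec, mulVec_smul, mulVec_mulVec, hA, ← mulVec_mulVec, hv, mulVec_zero, smul_zero]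
  rw [hM.sum_smul] at key
  simpa [single_mulVec_eq, mulVec_smul, mulVec_single, mul_comm, mul_assoc, mul_left_comm]
    using congrFun key i

theorem eq_zero_of_det_eq_zero [IsDomain K] (hM : SchurRelations M inv c) (hc : c ≠ 0)
    {A : Matrix n n K} {N : W → Matrix n n K} (hA : ∀ w, A * M (inv w) = N w * A)
    (hdet : A.det = 0) : A = 0 := by
  obtain ⟨v, hv0, hv⟩ := exists_mulVec_eq_zero_iff.mpr hdet
  obtain ⟨s, hs⟩ := Function.ne_iff.mp hv0
  ext i t
  exact (mul_eq_zero.mp (hM.mul_mul_eq_zero_of_mulVec_eq_zero hA hv i t s)).resolve_left (mul_ne_zero hc hs)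

theorem dvd_or_forall_dvd_of_dvd_det {M : W → Matrix n n ℤ} {f : ℤ}
    (hM : SchurRelations M inv f) {A : Matrix n n ℤ} {N : W → Matrix n n ℤ}
    (hA : ∀ w, A * M (inv w) = N w * A) {p : ℕ} (hp : p.Prime) (hdet : (p : ℤ) ∣ A.det) :
    (p : ℤ) ∣ f ∨ ∀ i j, (p : ℤ) ∣ A i j := by
  have := Fact.mk hp
  simp only [← ZMod.intCast_zmod_eq_zero_iff_dvd] at hdet ⊢
  refine or_iff_not_imp_left.mpr fun hf => ?_
  have hAp := (hM.map (Int.castRingHom (ZMod p))).eq_zero_of_det_eq_zero hf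
    (A := A.map (Int.castRingHom (ZMod p))) (N := fun w => (N w).map (Int.castRingHom (ZMod p)))
    (fun w => by simp only [← Matrix.map_mul, hA]) (by simpa [Int.cast_det] using hdet)
  exact fun i j => by simpa using congrArg (· i j) hAp

end SchurRelations

end Schur

section Gram

variable {W m n K L : Type*} [Fintype W] [Fintype m]

def gramSum [CommRing K] (M : W → Matrix m n K) : Matrix n n K := ∑ w, (M w)ᵀ * M w

variable [CommRing K]

theorem gramSum_isSymm (M : W → Matrix m n K) : (gramSum M).IsSymm := by
  simp only [IsSymm, gramSum, transpose_sum, transpose_mul, transpose_transpose]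

theorem gramSum_map [CommRing L] (M : W → Matrix m n K) (φ : K →+* L) :
    (gramSum M).map φ = gramSum fun w => (M w).map φ := by
  ext i j
  simp [gramSum, Matrix.sum_apply, mul_apply]

variable [Fintype n]

theorem gramSum_mul_eq_transpose_mul_gramSum (M : W → Matrix n n K) (inv : W → W)
    (a : W × W × W → K) (hmul : ∀ x y, M x * M y = ∑ z, a (x, y, z) • M z)
    (hsym : ∀ x y z, a (y, inv x, z) = a (z, x, y)) (w : W) :
    gramSum M * M (inv w) = (M w)ᵀ * gramSum M :=
  calc gramSum M * M (inv w) = ∑ x, ∑ z, a (z, w, x) • ((M x)ᵀ * M z) := by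
        simp only [gramSum, Finset.sum_mul, Matrix.mul_assoc, hmul, Finset.mul_sum,
          Matrix.mul_smul, hsym]
    _ = ∑ z, ∑ x, a (z, w, x) • ((M x)ᵀ * M z) := Finset.sum_comm
    _ = (M w)ᵀ * gramSum M := by
        simp only [gramSum, Finset.mul_sum, ← Matrix.mul_assoc, ← transpose_mul, hmul,
          transpose_sum, transpose_smul, Finset.sum_mul, smul_mul]

theorem dotProduct_gramSum_mulVec (M : W → Matrix m n K) (v : n → K) :
    v ⬝ᵥ (gramSum M *ᵥ v) = ∑ w, (M w *ᵥ v) ⬝ᵥ (M w *ᵥ v) := by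
  simp only [gramSum, sum_mulVec, dotProduct_sum, ← mulVec_mulVec, dotProduct_mulVec,
    vecMul_transpose]

theorem dotProduct_gramSum_mulVec_pos {K : Type*} [CommRing K] [LinearOrder K]
    [IsStrictOrderedRing K] {M : W → Matrix m n K} (hM : ∀ v, (∀ w, M w *ᵥ v = 0) → v = 0)
    {v : n → K} (hv : v ≠ 0) : 0 < v ⬝ᵥ (gramSum M *ᵥ v) := by
  have hsq (u : m → K) : 0 ≤ u ⬝ᵥ u := Finset.sum_nonneg fun i _ => mul_self_nonneg (u i)
  rw [dotProduct_gramSum_mulVec]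
  refine (Finset.sum_nonneg fun w _ => hsq _).lt_of_ne fun h0 => hv (hM v fun w => ?_)
  exact dotProduct_self_eq_zero.mp
    ((Finset.sum_eq_zero_iff_of_nonneg fun w _ => hsq _).mp h0.symm w (Finset.mem_univ w))

end Gram

theorem Matrix.exists_nonneg_smul_primitive {m n : Type*} [Fintype m] [Fintype n] [Nonempty m]
    [Nonempty n] (P : Matrix m n ℤ) :
    ∃ G : ℤ, 0 ≤ G ∧ ∃ B : Matrix m n ℤ, P = G • B ∧ ∀ p : ℤ, (∀ i j, p ∣ B i j) → IsUnit p := by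
  obtain ⟨g, hg, hg1⟩ := Finset.extract_gcd (fun q : m × n => P q.1 q.2) Finset.univ_nonempty
  refine ⟨_, Int.nonneg_of_normalize_eq_self Finset.normalize_gcd, .of fun i j => g (i, j),
    ext fun i j => hg (i, j) (Finset.mem_univ _), fun p hp => ?_⟩
  exact isUnit_of_dvd_one (hg1 ▸ Finset.dvd_gcd fun q _ => hp q.1 q.2)

theorem Matrix.exists_primitive_of_posDef_intertwiner {ι n : Type*} [Fintype n] [Nonempty n]
    {X Y : ι → Matrix n n ℤ} {P : Matrix n n ℤ} (hsymm : P.IsSymm)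
    (hpos : ∀ v : n → ℚ, v ≠ 0 → 0 < v ⬝ᵥ (P.map Int.cast *ᵥ v))
    (hP : ∀ i, P * X i = Y i * P) :
    ∃ B : Matrix n n ℤ, B.IsSymm ∧ (∀ v : n → ℚ, v ≠ 0 → 0 < v ⬝ᵥ (B.map Int.cast *ᵥ v)) ∧
      (∀ i, B * X i = Y i * B) ∧ ∀ p : ℤ, (∀ i j, p ∣ B i j) → IsUnit p := by
  obtain ⟨G, hG, B, rfl, hB⟩ := P.exists_nonneg_smul_primitive
  have hquad (v : n → ℚ) :
      v ⬝ᵥ ((G • B).map Int.cast *ᵥ v) = G * (v ⬝ᵥ (B.map Int.cast *ᵥ v)) := by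
    rw [show (G • B).map (Int.cast : ℤ → ℚ) = (G : ℚ) • B.map Int.cast by
      ext; simp only [map_apply, Matrix.smul_apply, smul_eq_mul, Int.cast_mul],
      smul_mulVec, dotProduct_smul, smul_eq_mul]
  have hG0 : G ≠ 0 := by
    have := hquad 1 ▸ hpos 1 one_ne_zero
    exact_mod_cast left_ne_zero_of_mul this.ne'
  refine ⟨B, smul_right_injective _ hG0 ?_, fun v hv => ?_, fun i => ?_, hB⟩
  · change G • _ = G • _
    rw [← transpose_smul, hsymm]
  · exact pos_of_mul_pos_right (hquad v ▸ hpos v hv) (by exact_mod_cast hG)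
  · refine smul_right_injective _ hG0 (?_ : G • _ = G • _)
    rw [← smul_mul, ← Matrix.mul_smul, hP]

theorem exists_map_intCast_eq {W m n K : Type*} [IntCast K] {ρ : W → Matrix m n K}
    (hρ : ∀ w i j, ∃ k : ℤ, ρ w i j = k) :
    ∃ M : W → Matrix m n ℤ, (fun w => (M w).map Int.cast) = ρ := by
  choose M hM using hρ
  exact ⟨fun w => .of (M w), funext fun w => ext fun i j => (hM w i j).symm⟩

/-- Coordinate form of Proposition 2.6 of Geck, "Hecke algebras of finite type are
cellular": an integral matrix representation of a ring with symmetric structure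
constants satisfying the Schur relations with Schur element `f` admits a symmetric,
positive-definite integral intertwining matrix `B` whose determinant is divisible
only by primes dividing `f`. -/
theorem stmt_0 (W : Type) [Fintype W] (inv : W → W)
    (d : ℕ) (hd : 1 ≤ d) (h : W × W × W → ℤ)
    (ρ : W → Matrix (Fin d) (Fin d) ℚ)
    (hint : ∀ (w : W) (i j : Fin d), ∃ n : ℤ, ρ w i j = (n : ℚ))
    (hmul : ∀ x y : W, ρ x * ρ y = ∑ z : W, (h (x, y, z) : ℚ) • ρ z)
    (hsym : ∀ x y z : W, h (y, inv x, z) = h (z, x, y))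
    (f : ℤ) (hf : f ≠ 0)
    (hschur : ∀ s t u v : Fin d,
      ∑ w : W, ρ w s t * ρ (inv w) u v = if s = v ∧ t = u then (f : ℚ) else 0) :
    ∃ B : Matrix (Fin d) (Fin d) ℤ, B.IsSymm ∧
      (∀ v : Fin d → ℚ, v ≠ 0 →
        0 < dotProduct v ((B.map (Int.cast : ℤ → ℚ)) *ᵥ v)) ∧
      (∀ w : W, (B.map (Int.cast : ℤ → ℚ)) * ρ (inv w) =
        (ρ w)ᵀ * (B.map (Int.cast : ℤ → ℚ))) ∧
      (∀ p : ℕ, p.Prime → (p : ℤ) ∣ B.det → (p : ℤ) ∣ f) := by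
  obtain ⟨M, rfl⟩ := exists_map_intCast_eq hint
  have hmulZ : ∀ x y, M x * M y = ∑ z, h (x, y, z) • M z := fun x y => by
    ext i j
    have := congrArg (· i j) (hmul x y)
    simp only [mul_apply, Matrix.sum_apply, Matrix.smul_apply, smul_eq_mul, map_apply] at this ⊢
    exact_mod_cast this
  have hschurQ : SchurRelations (fun w => (M w).map (Int.castRingHom ℚ)) inv (f : ℚ) := hschur
  have hschurZ : SchurRelations M inv f := .of_map Int.cast_injective hschurQ
  have hpos (v : Fin d → ℚ) (hv : v ≠ 0) : 0 < v ⬝ᵥ ((gramSum M).map Int.cast *ᵥ v) := by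
    refine (gramSum_map M (Int.castRingHom ℚ)).symm ▸ dotProduct_gramSum_mulVec_pos (fun u hu => ?_) hv
    simpa [Int.cast_ne_zero.mpr hf] using
      hschurQ.smul_eq_zero_of_forall_mulVec_eq_zero fun w => hu (inv w)
  have : Nonempty (Fin d) := ⟨⟨0, hd⟩⟩
  obtain ⟨B, hBsymm, hBpos, hBint, hB⟩ := exists_primitive_of_posDef_intertwiner
    (gramSum_isSymm M) hpos (gramSum_mul_eq_transpose_mul_gramSum M inv _ hmulZ hsym)
  refine ⟨B, hBsymm, hBpos, fun w => ?_, fun p hp hdet => ?_⟩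
  · have := congrArg (Int.castRingHom ℚ).mapMatrix (hBint w)
    rw [map_mul, map_mul] at this
    simpa [transpose_map] using this
  · refine (hschurZ.dvd_or_forall_dvd_of_dvd_det hBint hp hdet).resolve_right fun hall => ?_
    exact (Nat.prime_iff_prime_int.mp hp).not_isUnit (hB p hall)
end

section
/- Let W be a finite set, inv : W → W a map, d ≥ 1 an integer, h : W × W × W → ℤ, and for each w ∈ W let ρ(w) be a d×d matrix with rational entries such that ρ(x)·ρ(y) = Σ_{z∈W} h(x,y,z)·ρ(z) for all x,y ∈ W and h(y, inv(x), z) = h(z, x, y) for all x,y,z ∈ W. Assume the family is irreducible, i.e., the only ℚ-subspaces U ⊆ ℚ^d with ρ(w)·U ⊆ U for all w ∈ W are U = 0 and U = ℚ^d. Then there exists a symmetric d×d integer matrix B which is positive definite (vᵀ·B·v > 0 for every nonzero v ∈ ℚ^d) such that B·ρ(inv(w)) = ρ(w)ᵀ·B for every w ∈ W. -/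
/-!
The form is `B₀ = ∑ₓ ρ(x)ᵀ ρ(x)`, whose quadratic form `v ↦ ∑ₓ ‖ρ(x) v‖²` is a sum of squares.
The symmetry `h(y, inv x, z) = h(z, x, y)` of the structure constants is exactly what makes
`B₀ ρ(inv w)` and `ρ(w)ᵀ B₀` the same double sum. The common kernel of the `ρ(x)` is invariant,
so by irreducibility it is either `0`, and then `B₀` is positive definite, or everything, and then
`ρ = 0` and `B = 1` works. Finally a positive multiple of `B₀` has integer entries.
-/

open Matrix

namespace Matrix

variable {W n R : Type*} [Fintype n]

def commonKer [CommSemiring R] (ρ : W → Matrix n n R) : Submodule R (n → R) :=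
  ⨅ x, LinearMap.ker (ρ x).mulVecLin

section CommonKer

variable [CommSemiring R] {ρ : W → Matrix n n R}

theorem mem_commonKer {v : n → R} : v ∈ commonKer ρ ↔ ∀ x, ρ x *ᵥ v = 0 := by
  simp [commonKer, Submodule.mem_iInf]

theorem mulVec_mem_commonKer (w : W) {u : n → R} (hu : u ∈ commonKer ρ) :
    ρ w *ᵥ u ∈ commonKer ρ := by
  rw [mem_commonKer.mp hu w]
  exact zero_mem _

theorem commonKer_eq_top_iff : commonKer ρ = ⊤ ↔ ∀ x, ρ x = 0 := by
  simp only [Submodule.eq_top_iff', mem_commonKer, ext_iff_mulVec (B := 0), zero_mulVec]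
  exact forall_comm

end CommonKer

variable [Fintype W]

def sumTransposeMulSelf [CommSemiring R] (ρ : W → Matrix n n R) : Matrix n n R :=
  ∑ x, (ρ x)ᵀ * ρ x

section CommSemiring

variable [CommSemiring R] (ρ : W → Matrix n n R)

theorem sumTransposeMulSelf_isSymm : (sumTransposeMulSelf ρ).IsSymm := by
  simp only [IsSymm, sumTransposeMulSelf, transpose_sum, transpose_mul, transpose_transpose]

theorem dotProduct_sumTransposeMulSelf_mulVec (v : n → R) :
    v ⬝ᵥ sumTransposeMulSelf ρ *ᵥ v = ∑ x, ρ x *ᵥ v ⬝ᵥ ρ x *ᵥ v := by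
  simp only [sumTransposeMulSelf, sum_mulVec, dotProduct_sum, ← mulVec_mulVec, dotProduct_mulVec,
    vecMul_transpose]

end CommSemiring

section CommRing

variable [CommRing R] {ρ : W → Matrix n n R} {h : W × W × W → R}

theorem sumTransposeMulSelf_mul_eq_transpose_mul {inv : W → W}
    (hmul : ∀ x y, ρ x * ρ y = ∑ z, h (x, y, z) • ρ z)
    (hsym : ∀ x y z, h (y, inv x, z) = h (z, x, y)) (w : W) :
    sumTransposeMulSelf ρ * ρ (inv w) = (ρ w)ᵀ * sumTransposeMulSelf ρ := by
  calc sumTransposeMulSelf ρ * ρ (inv w)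
      = ∑ x, ∑ z, h (z, w, x) • ((ρ x)ᵀ * ρ z) := by
        simp only [sumTransposeMulSelf, Finset.sum_mul, Matrix.mul_assoc, hmul, Finset.mul_sum,
          hsym, Matrix.mul_smul]
    _ = ∑ z, ∑ x, h (z, w, x) • ((ρ x)ᵀ * ρ z) := Finset.sum_comm
    _ = (ρ w)ᵀ * sumTransposeMulSelf ρ := by
        simp only [sumTransposeMulSelf, Finset.mul_sum, ← Matrix.mul_assoc, ← transpose_mul, hmul,
          transpose_sum, transpose_smul, Finset.sum_mul, smul_mul]

end CommRing

section LinearOrder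

variable [LinearOrder R]

theorem dotProduct_self_nonneg [Ring R] [IsStrictOrderedRing R] (v : n → R) : 0 ≤ v ⬝ᵥ v :=
  Finset.sum_nonneg fun i _ => mul_self_nonneg (v i)

theorem dotProduct_self_pos [Ring R] [IsStrictOrderedRing R] {v : n → R} (hv : v ≠ 0) :
    0 < v ⬝ᵥ v :=
  (dotProduct_self_nonneg v).lt_of_ne (Ne.symm (dotProduct_self_eq_zero.not.mpr hv))

theorem dotProduct_sumTransposeMulSelf_mulVec_pos [CommRing R] [IsStrictOrderedRing R]
    {ρ : W → Matrix n n R} {v : n → R} (hv : v ∉ commonKer ρ) :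
    0 < v ⬝ᵥ sumTransposeMulSelf ρ *ᵥ v := by
  obtain ⟨x, hx⟩ := not_forall.mp (mem_commonKer.not.mp hv)
  rw [dotProduct_sumTransposeMulSelf_mulVec]
  exact Finset.sum_pos' (fun y _ => dotProduct_self_nonneg _)
    ⟨x, Finset.mem_univ _, dotProduct_self_pos hx⟩

end LinearOrder

theorem exists_map_intCast_eq_natCast_smul {m : Type*} [Fintype m] (A : Matrix m n ℚ) :
    ∃ N : ℕ, 0 < N ∧ ∃ B : Matrix m n ℤ, B.map (Int.cast : ℤ → ℚ) = (N : ℚ) • A := by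
  set N := ∏ i, ∏ j, (A i j).den
  have hdvd : ∀ i j, (A i j).den ∣ N := fun i j =>
    (Finset.dvd_prod_of_mem _ (Finset.mem_univ j)).trans
      (Finset.dvd_prod_of_mem (fun i => ∏ j, (A i j).den) (Finset.mem_univ i))
  refine ⟨N, Finset.prod_pos fun i _ => Finset.prod_pos fun j _ => (A i j).pos,
    of fun i j => (A i j).num * (N / (A i j).den : ℕ), ?_⟩
  ext i j
  have hden : ((A i j).den : ℚ) ≠ 0 := by exact_mod_cast (A i j).den_ne_zero
  simp only [map_apply, of_apply, smul_apply, smul_eq_mul, Int.cast_mul, Int.cast_natCast,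
    Nat.cast_div (hdvd i j) hden]
  rw [← Rat.mul_den_eq_num]
  field_simp

end Matrix

theorem stmt_1_general (W : Type) [Fintype W] (inv : W → W)
    (d : ℕ) (h : W × W × W → ℤ)
    (ρ : W → Matrix (Fin d) (Fin d) ℚ)
    (hmul : ∀ x y : W, ρ x * ρ y = ∑ z : W, (h (x, y, z) : ℚ) • ρ z)
    (hsym : ∀ x y z : W, h (y, inv x, z) = h (z, x, y))
    (hirr : ∀ U : Submodule ℚ (Fin d → ℚ),
      (∀ w : W, ∀ u ∈ U, (ρ w) *ᵥ u ∈ U) → U = ⊥ ∨ U = ⊤) :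
    ∃ B : Matrix (Fin d) (Fin d) ℤ, B.IsSymm ∧
      (∀ v : Fin d → ℚ, v ≠ 0 →
        0 < dotProduct v ((B.map (Int.cast : ℤ → ℚ)) *ᵥ v)) ∧
      (∀ w : W, (B.map (Int.cast : ℤ → ℚ)) * ρ (inv w) =
        (ρ w)ᵀ * (B.map (Int.cast : ℤ → ℚ))) := by
  rcases hirr (commonKer ρ) (fun w _ => mulVec_mem_commonKer w) with hK | hK
  · obtain ⟨N, hN, B, hB⟩ := exists_map_intCast_eq_natCast_smul (sumTransposeMulSelf ρ)
    have hN' : (0 : ℚ) < N := by exact_mod_cast hN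
    refine ⟨B, ?_, fun v hv => ?_, fun w => ?_⟩
    · refine map_injective (Int.cast_injective (α := ℚ)) ?_
      dsimp only
      rw [transpose_map, hB, transpose_smul, sumTransposeMulSelf_isSymm ρ]
    · rw [hB, smul_mulVec, dotProduct_smul, smul_eq_mul]
      exact mul_pos hN' (dotProduct_sumTransposeMulSelf_mulVec_pos (by simpa [hK] using hv))
    · rw [hB, smul_mul, Matrix.mul_smul, sumTransposeMulSelf_mul_eq_transpose_mul
        (h := fun t => (h t : ℚ)) hmul (fun x y z => congrArg _ (hsym x y z))]
  · have hρ := commonKer_eq_top_iff.mp hK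
    refine ⟨1, isSymm_one, fun v hv => ?_, fun w => ?_⟩
    · simpa [map_one] using dotProduct_self_pos hv
    · simp [hρ]

/-- Coordinate form of parts (a) and (b) of Proposition 2.6 of Geck, "Hecke algebras
of finite type are cellular": an irreducible rational matrix representation of a ring
with symmetric structure constants leaves invariant a positive-definite symmetric
bilinear form with integer Gram matrix, in the twisted sense
`B·ρ(inv w) = ρ(w)ᵀ·B`. -/
theorem stmt_1 (W : Type) [Fintype W] (inv : W → W)
    (d : ℕ) (hd : 1 ≤ d) (h : W × W × W → ℤ)
    (ρ : W → Matrix (Fin d) (Fin d) ℚ)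
    (hmul : ∀ x y : W, ρ x * ρ y = ∑ z : W, (h (x, y, z) : ℚ) • ρ z)
    (hsym : ∀ x y z : W, h (y, inv x, z) = h (z, x, y))
    (hirr : ∀ U : Submodule ℚ (Fin d → ℚ),
      (∀ w : W, ∀ u ∈ U, (ρ w) *ᵥ u ∈ U) → U = ⊥ ∨ U = ⊤) :
    ∃ B : Matrix (Fin d) (Fin d) ℤ, B.IsSymm ∧
      (∀ v : Fin d → ℚ, v ≠ 0 →
        0 < dotProduct v ((B.map (Int.cast : ℤ → ℚ)) *ᵥ v)) ∧
      (∀ w : W, (B.map (Int.cast : ℤ → ℚ)) * ρ (inv w) =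
        (ρ w)ᵀ * (B.map (Int.cast : ℤ → ℚ))) :=
  stmt_1_general W inv d h ρ hmul hsym hirr
end

section
/- Let R be a commutative ring, W a finite set, inv : W → W a map, d ≥ 1, h : W × W × W → R, and for each w ∈ W let ρ(w) be a d×d matrix over R such that ρ(x)·ρ(y) = Σ_{z∈W} h(x,y,z)·ρ(z) for all x,y ∈ W and h(y, inv(x), z) = h(z, x, y) for all x,y,z ∈ W. Then the matrix B₁ = Σ_{y∈W} ρ(y)ᵀ·ρ(y) satisfies B₁·ρ(inv(x)) = ρ(x)ᵀ·B₁ for every x ∈ W. -/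
open Matrix

/-- The intertwining computation in the proof of Proposition 2.6 of Geck, "Hecke
algebras of finite type are cellular": for a matrix representation of a ring whose
structure constants satisfy the symmetry `h(y, inv x, z) = h(z, x, y)`, the matrix
`B₁ = Σ_y ρ(y)ᵀ·ρ(y)` satisfies `B₁·ρ(inv x) = ρ(x)ᵀ·B₁`. -/
theorem stmt_3 (R : Type) [CommRing R] (W : Type) [Fintype W] (inv : W → W)
    (d : ℕ) (hd : 1 ≤ d) (h : W × W × W → R)
    (ρ : W → Matrix (Fin d) (Fin d) R)
    (hmul : ∀ x y : W, ρ x * ρ y = ∑ z : W, h (x, y, z) • ρ z)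
    (hsym : ∀ x y z : W, h (y, inv x, z) = h (z, x, y)) :
    ∀ x : W, (∑ y : W, (ρ y)ᵀ * ρ y) * ρ (inv x) =
      (ρ x)ᵀ * (∑ y : W, (ρ y)ᵀ * ρ y) := by
  intro x
  rw [Finset.sum_mul, Finset.mul_sum]
  have lhs : ∀ y : W, (ρ y)ᵀ * ρ y * ρ (inv x)
      = ∑ z : W, h (z, x, y) • ((ρ y)ᵀ * ρ z) := by
    intro y
    rw [mul_assoc, hmul, Finset.mul_sum]
    exact Finset.sum_congr rfl fun z _ => by rw [Matrix.mul_smul, hsym]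
  have rhs : ∀ z : W, (ρ x)ᵀ * ((ρ z)ᵀ * ρ z)
      = ∑ y : W, h (z, x, y) • ((ρ y)ᵀ * ρ z) := by
    intro z
    rw [← mul_assoc, ← Matrix.transpose_mul, hmul, Matrix.transpose_sum,
      Finset.sum_mul]
    exact Finset.sum_congr rfl fun y _ => by
      rw [Matrix.transpose_smul, Matrix.smul_mul]
  simp only [lhs, rhs]
  exact Finset.sum_comm
end

section
/- Let R be a commutative ring, W a finite set, inv : W → W a map, Λ a finite index set, and for each λ ∈ Λ let d(λ) ≥ 1, let ρ^λ : W → M_{d(λ)}(R) be a family of matrices, let f(λ) ∈ R be invertible, and let B^λ be an invertible d(λ)×d(λ) matrix over R. Let ε : W → R satisfy ε(w)² = 1 for all w, and assume the second Schur relations: for all x,y ∈ W, Σ_{λ∈Λ} Σ_{s,t=1}^{d(λ)} f(λ)⁻¹·ρ^λ(x)_{s,t}·ρ^λ(inv(y))_{t,s} equals 1 if x = y and 0 otherwise. In the free R-module with basis {e_w : w ∈ W}, define C^λ_{s,t} := Σ_{w∈W} ε(w)·(B^λ·ρ^λ(inv(w)))_{t,s}·e_w. Then the elements {C^λ_{s,t}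 : λ ∈ Λ, 1 ≤ s,t ≤ d(λ)} span the free R-module; if moreover Σ_{λ∈Λ} d(λ)² equals the cardinality of W, they form an R-basis. -/
/-!
Write `e_w` for the standard basis of `W →₀ R`. By the second Schur relations, and since
`(ρ^λ(y) B_λ⁻¹)(B_λ ρ^λ(inv w))` has the trace of `ρ^λ(y) ρ^λ(inv w)`, the coefficients
`ε(y) f(λ)⁻¹ (ρ^λ(y) B_λ⁻¹)_{s,t}` express each `e_y` as a combination of the `C^λ_{s,t}`
(the sign `ε(y)ε(w)` only matters at `w = y`, where it is `ε(y)² = 1`). So the `C^λ_{s,t}` span;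
when there are `|W|` of them, a spanning family of a free module of rank `|W|` over a
commutative ring is a basis.
-/

open Matrix

theorem Matrix.trace_mul_eq_sum_sum {m n R : Type*} [Fintype m] [Fintype n]
    [NonUnitalNonAssocSemiring R] (X : Matrix m n R) (Y : Matrix n m R) :
    trace (X * Y) = ∑ s, ∑ t, X s t * Y t s := by
  simp only [trace, diag, mul_apply]

theorem Finsupp.univ_sum_single_apply_eq {M W : Type*} [AddCommMonoid M] [Fintype W]
    (g : W → M) (w : W) : (∑ x, Finsupp.single x (g x)) w = g w := by
  classical
  simp [Finsupp.finsetSum_apply, Finsupp.single_apply]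

theorem Finsupp.span_eq_top_of_single_one_mem {R ι : Type*} [Semiring R] {s : Set (ι →₀ R)}
    (h : ∀ y, Finsupp.single y 1 ∈ Submodule.span R s) : Submodule.span R s = ⊤ := by
  rw [eq_top_iff, ← Finsupp.basisSingleOne.span_eq, Submodule.span_le,
    Finsupp.coe_basisSingleOne]
  exact Set.range_subset_iff.2 h

theorem Finsupp.linearIndependent_of_span_eq_top_of_card_eq {R ι W : Type*} [CommRing R]
    [Fintype ι] [Fintype W] {v : ι → W →₀ R} (hspan : Submodule.span R (Set.range v) = ⊤)
    (hcard : Fintype.card ι = Fintype.card W) : LinearIndependent R v := by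
  cases subsingleton_or_nontrivial R
  · exact linearIndependent_of_subsingleton
  · exact linearIndependent_of_top_le_span_of_card_eq_finrank hspan.ge
      (by rw [Module.finrank_finsupp_self, hcard])

section CellBasis

variable {R W Λ : Type*} [CommRing R] {d : Λ → ℕ} (inv : W → W)
  (ρ : (l : Λ) → W → Matrix (Fin (d l)) (Fin (d l)) R) (f : Λ → Rˣ)
  (B : (l : Λ) → Matrix (Fin (d l)) (Fin (d l)) R) (ε : W → R)

noncomputable def cellElement [Fintype W] (i : Σ l : Λ, Fin (d l) × Fin (d l)) : W →₀ R :=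
  ∑ w : W, Finsupp.single w (ε w * (B i.1 * ρ i.1 (inv w)) i.2.2 i.2.1)

theorem cellElement_apply [Fintype W] (i : Σ l : Λ, Fin (d l) × Fin (d l)) (w : W) :
    cellElement inv ρ B ε i w = ε w * (B i.1 * ρ i.1 (inv w)) i.2.2 i.2.1 :=
  Finsupp.univ_sum_single_apply_eq _ w

noncomputable def cellDualCoeff (y : W) (i : Σ l : Λ, Fin (d l) × Fin (d l)) : R :=
  ε y * ((f i.1)⁻¹ : Rˣ) * (ρ i.1 y * (B i.1)⁻¹) i.2.1 i.2.2

theorem schur_relations_trace [Fintype Λ] [DecidableEq W]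
    (hschur2 : ∀ x y : W, ∑ l : Λ, ∑ s : Fin (d l), ∑ t : Fin (d l),
        (((f l)⁻¹ : Rˣ) : R) * ρ l x s t * ρ l (inv y) t s = if x = y then 1 else 0)
    (x y : W) :
    ∑ l : Λ, (((f l)⁻¹ : Rˣ) : R) * trace (ρ l x * ρ l (inv y)) = if x = y then 1 else 0 := by
  simp only [trace_mul_eq_sum_sum, Finset.mul_sum, ← mul_assoc, hschur2]

theorem sum_cellDualCoeff_smul_cellElement [Fintype W] [Fintype Λ] [DecidableEq W]
    (hB : ∀ l : Λ, IsUnit (B l)) (hε : ∀ w : W, ε w ^ 2 = 1)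
    (hschur2 : ∀ x y : W, ∑ l : Λ, ∑ s : Fin (d l), ∑ t : Fin (d l),
        (((f l)⁻¹ : Rˣ) : R) * ρ l x s t * ρ l (inv y) t s = if x = y then 1 else 0)
    (y : W) :
    ∑ i, cellDualCoeff ρ f B ε y i • cellElement inv ρ B ε i = Finsupp.single y 1 := by
  ext w
  have hcancel : ∀ l, (ρ l y * (B l)⁻¹) * (B l * ρ l (inv w)) = ρ l y * ρ l (inv w) := fun l => by
    rw [Matrix.mul_assoc, ← Matrix.mul_assoc (B l)⁻¹,
      nonsing_inv_mul _ ((isUnit_iff_isUnit_det _).mp (hB l)), Matrix.one_mul]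
  calc (∑ i, cellDualCoeff ρ f B ε y i • cellElement inv ρ B ε i) w
      = ε y * ε w * ∑ l, (((f l)⁻¹ : Rˣ) : R) * trace (ρ l y * ρ l (inv w)) := by
        simp only [Finsupp.finsetSum_apply, Finsupp.smul_apply, smul_eq_mul, cellElement_apply,
          cellDualCoeff, Fintype.sum_sigma, Fintype.sum_prod_type, ← hcancel,
          trace_mul_eq_sum_sum, Finset.mul_sum]
        refine Fintype.sum_congr _ _ fun l => Fintype.sum_congr _ _ fun s =>
          Fintype.sum_congr _ _ fun t => by ring
    _ = Finsupp.single y 1 w := by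
        rw [schur_relations_trace inv ρ f hschur2, Finsupp.single_apply]
        split_ifs with h
        · rw [← h, mul_one, ← sq, hε]
        · rw [mul_zero]

theorem span_range_cellElement [Fintype W] [Fintype Λ] [DecidableEq W]
    (hB : ∀ l : Λ, IsUnit (B l)) (hε : ∀ w : W, ε w ^ 2 = 1)
    (hschur2 : ∀ x y : W, ∑ l : Λ, ∑ s : Fin (d l), ∑ t : Fin (d l),
        (((f l)⁻¹ : Rˣ) : R) * ρ l x s t * ρ l (inv y) t s = if x = y then 1 else 0) :
    Submodule.span R (Set.range (cellElement inv ρ B ε)) = ⊤ :=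
  Finsupp.span_eq_top_of_single_one_mem fun y =>
    Submodule.mem_span_range_iff_exists_fun R |>.2
      ⟨_, sum_cellDualCoeff_smul_cellElement inv ρ f B ε hB hε hschur2 y⟩

end CellBasis

theorem stmt_9_general (R : Type) [CommRing R] (W : Type) [Fintype W] [DecidableEq W] (inv : W → W)
    (Λ : Type) [Fintype Λ] (d : Λ → ℕ)
    (ρ : (l : Λ) → W → Matrix (Fin (d l)) (Fin (d l)) R)
    (f : Λ → Rˣ)
    (B : (l : Λ) → Matrix (Fin (d l)) (Fin (d l)) R)
    (hB : ∀ l : Λ, IsUnit (B l))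
    (ε : W → R) (hε : ∀ w : W, ε w ^ 2 = 1)
    (hschur2 : ∀ x y : W,
      ∑ l : Λ, ∑ s : Fin (d l), ∑ t : Fin (d l),
        (((f l)⁻¹ : Rˣ) : R) * ρ l x s t * ρ l (inv y) t s = if x = y then 1 else 0) :
    Submodule.span R (Set.range
        (fun i : Σ l : Λ, Fin (d l) × Fin (d l) =>
          ∑ w : W, Finsupp.single w (ε w * (B i.1 * ρ i.1 (inv w)) i.2.2 i.2.1)))
      = (⊤ : Submodule R (W →₀ R)) ∧
    (Fintype.card W = ∑ l : Λ, (d l) ^ 2 →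
      ∃ b : Module.Basis (Σ l : Λ, Fin (d l) × Fin (d l)) R (W →₀ R),
        ∀ i : Σ l : Λ, Fin (d l) × Fin (d l),
          b i = ∑ w : W, Finsupp.single w (ε w * (B i.1 * ρ i.1 (inv w)) i.2.2 i.2.1)) := by
  have hspan := span_range_cellElement inv ρ f B ε hB hε hschur2
  refine ⟨hspan, fun hcard => ?_⟩
  have hcard' : Fintype.card (Σ l : Λ, Fin (d l) × Fin (d l)) = Fintype.card W := by
    simp [Fintype.card_sigma, hcard, sq]
  exact ⟨.mk (Finsupp.linearIndependent_of_span_eq_top_of_card_eq hspan hcard') hspan.ge,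
    fun i => Module.Basis.mk_apply _ _ i⟩

/-- Step 1 ((C1) of Graham–Lehrer's cell datum axioms) in the proof of Theorem 3.1 of
Geck, "Hecke algebras of finite type are cellular": the candidate cellular basis
elements `C^λ_{s,t} = Σ_w ε(w)·(B^λ·ρ^λ(inv w))_{t,s}·e_w` span the free module with
basis `{e_w : w ∈ W}`, provided the second Schur relations hold, the Schur elements
`f λ` are invertible and the matrices `B^λ` are invertible; if moreover
`|W| = Σ_λ d(λ)²`, they form a basis. -/
theorem stmt_9 (R : Type) [CommRing R] (W : Type) [Fintype W] [DecidableEq W] (inv : W → W)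
    (Λ : Type) [Fintype Λ] (d : Λ → ℕ) (hd : ∀ l : Λ, 1 ≤ d l)
    (ρ : (l : Λ) → W → Matrix (Fin (d l)) (Fin (d l)) R)
    (f : Λ → Rˣ)
    (B : (l : Λ) → Matrix (Fin (d l)) (Fin (d l)) R)
    (hB : ∀ l : Λ, IsUnit (B l))
    (ε : W → R) (hε : ∀ w : W, ε w ^ 2 = 1)
    (hschur2 : ∀ x y : W,
      ∑ l : Λ, ∑ s : Fin (d l), ∑ t : Fin (d l),
        (((f l)⁻¹ : Rˣ) : R) * ρ l x s t * ρ l (inv y) t s = if x = y then 1 else 0) :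
    Submodule.span R (Set.range
        (fun i : Σ l : Λ, Fin (d l) × Fin (d l) =>
          ∑ w : W, Finsupp.single w (ε w * (B i.1 * ρ i.1 (inv w)) i.2.2 i.2.1)))
      = (⊤ : Submodule R (W →₀ R)) ∧
    (Fintype.card W = ∑ l : Λ, (d l) ^ 2 →
      ∃ b : Module.Basis (Σ l : Λ, Fin (d l) × Fin (d l)) R (W →₀ R),
        ∀ i : Σ l : Λ, Fin (d l) × Fin (d l),
          b i = ∑ w : W, Finsupp.single w (ε w * (B i.1 * ρ i.1 (inv w)) i.2.2 i.2.1)) :=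
  stmt_9_general R W inv Λ d ρ f B hB ε hε hschur2
end

section
/- Let R be a commutative ring, W a finite set, inv : W → W an involution, γ : W × W × W → R, and m : W → R with m(w)² = 1 for all w. Assume: (i) cyclic invariance γ(x,y,z) = γ(y,z,x) for all x,y,z; (ii) whenever γ(x,w,inv(z)) ≠ 0 one has m(inv(w)) = m(inv(z)). Let d ≥ 1, let ρ : W → M_d(R) satisfy ρ(a)·ρ(b) = Σ_{c∈W} γ(a,b,inv(c))·ρ(c) for all a,b ∈ W, and let B be a d×d matrix over R with B·ρ(inv(w)) = ρ(w)ᵀ·B for all w. In the free R-module with basis {e_w : w ∈ W}, define the operator of x ∈ W by x ⋆ e_w := Σ_{z∈W} γ(x,w,inv(z))·m(w)·m(z)·e_z, and set C_{s,t} := Σ_{w∈W} m(w)·m(inv(w))·(B·ρ(inv(w)))_{t,s}·e_w for s,t ∈ {1,…,d}. Then for all x ∈ W and all s,t: x ⋆ C_{s,t} = Σ_{s'=1}^{d} ρ(x)_{s',s}·C_{s',t}. -/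
open Matrix

/-- The key computation in Step 3 ((C3) of Graham–Lehrer's cell datum axioms) of the
proof of Theorem 3.1 of Geck, "Hecke algebras of finite type are cellular": for the
action `x ⋆ e_w = Σ_z γ(x,w,inv z)·m(w)·m(z)·e_z` on the free module with basis
`{e_w}`, the elements `C_{s,t} = Σ_w m(w)·m(inv w)·(B·ρ(inv w))_{t,s}·e_w` satisfy
`x ⋆ C_{s,t} = Σ_{s'} ρ(x)_{s',s}·C_{s',t}`. -/
theorem stmt_10 (R : Type) [CommRing R] (W : Type) [Fintype W] (inv : W → W)
    (hinv : ∀ w : W, inv (inv w) = w)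
    (γ : W × W × W → R) (m : W → R) (hm : ∀ w : W, m w ^ 2 = 1)
    (hcyc : ∀ x y z : W, γ (x, y, z) = γ (y, z, x))
    (hcell : ∀ x w z : W, γ (x, w, inv z) ≠ 0 → m (inv w) = m (inv z))
    (d : ℕ) (hd : 1 ≤ d) (ρ : W → Matrix (Fin d) (Fin d) R)
    (hmul : ∀ a b : W, ρ a * ρ b = ∑ c : W, γ (a, b, inv c) • ρ c)
    (B : Matrix (Fin d) (Fin d) R)
    (hB : ∀ w : W, B * ρ (inv w) = (ρ w)ᵀ * B) :
    ∀ (x : W) (s t : Fin d),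
      (∑ w : W, (m w * m (inv w) * (B * ρ (inv w)) t s) •
          ∑ z : W, Finsupp.single z (γ (x, w, inv z) * m w * m z)) =
      ∑ s' : Fin d, ρ x s' s •
          ∑ w : W, Finsupp.single w (m w * m (inv w) * (B * ρ (inv w)) t s') := by
  intro x s t
  classical
  have hinvol : Function.Involutive inv := hinv
  ext z
  simp only [Finsupp.finset_sum_apply, Finsupp.smul_apply, Finsupp.single_apply,
    Finset.smul_sum, smul_eq_mul, Finset.mul_sum]
  simp only [Finsupp.single_apply, Finset.sum_ite_eq', Finset.sum_ite_eq, Finset.mem_univ, if_true, mul_ite, mul_zero]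
  -- LHS: Σ_w (m w * m (inv w) * (B * ρ (inv w)) t s) * (γ (x,w,inv z) * m w * m z)
  have key : (∑ w : W, γ (x, w, inv z) • (B * ρ (inv w))) = B * (ρ (inv z) * ρ x) := by
    rw [hmul, Finset.mul_sum]
    refine Fintype.sum_bijective inv hinvol.bijective _ _ fun w => ?_
    rw [hinv, Matrix.mul_smul, hcyc, hcyc]
  calc ∑ w : W, m w * m (inv w) * (B * ρ (inv w)) t s * (γ (x, w, inv z) * m w * m z)
      = ∑ w : W, m z * m (inv z) * (γ (x, w, inv z) * (B * ρ (inv w)) t s) := by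
        refine Finset.sum_congr rfl fun w _ => ?_
        by_cases h : γ (x, w, inv z) = 0
        · simp [h]
        · rw [← hcell x w z h]
          ring_nf
          rw [hm w, one_mul]
    _ = m z * m (inv z) * ∑ w : W, γ (x, w, inv z) * (B * ρ (inv w)) t s := by
        rw [Finset.mul_sum]
    _ = m z * m (inv z) * (B * (ρ (inv z) * ρ x)) t s := by
        congr 1
        rw [← key]
        simp [Matrix.sum_apply]
    _ = ∑ s' : Fin d, ρ x s' s * (m z * m (inv z) * (B * ρ (inv z)) t s') := by
        rw [← Matrix.mul_assoc, Matrix.mul_apply, Finset.mul_sum]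
        exact Finset.sum_congr rfl fun s' _ => by ring
end
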